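/- If G' is the edge-colored subdivision of an edge-colored graph G (each edge e = v_i v_j of color c(e) replaced by edges v_i v_e of color c(e) and v_j v_e of a fresh color l_e, all l_e distinct and new), and G' is rainbow connected, then for every two original vertices u, v ∈ V(G), every rainbow u–v path in G' projects (by contracting the freshly colored edges) to a rainbow u–v path in G. -/

import Mathlib

open SimpleGraph

def IsRainbowColoring {V : Type*} (G : SimpleGraph V) (c : Sym2 V → ℕ) : Prop :=
  ∀ u v : V, ∃ p : G.Walk u v, p.IsPath ∧ (p.edges.map c).Nodup

def IsStrongRainbowColoring {V : Type*} (G : SimpleGraph V) (c : Sym2 V → ℕ) : Prop :=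
  ∀ u v : V, ∃ p : G.Walk u v, p.IsPath ∧ (p.edges.map c).Nodup ∧ p.length = G.dist u v

noncomputable def rc {V : Type*} (G : SimpleGraph V) : ℕ :=
  sInf {k | ∃ c : Sym2 V → ℕ, (∀ e ∈ G.edgeSet, c e < k) ∧ IsRainbowColoring G c}

noncomputable def src {V : Type*} (G : SimpleGraph V) : ℕ :=
  sInf {k | ∃ c : Sym2 V → ℕ, (∀ e ∈ G.edgeSet, c e < k) ∧ IsStrongRainbowColoring G c}

def subdivision {V : Type*} (G : SimpleGraph V) : SimpleGraph (V ⊕ G.edgeSet) where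
  Adj a b := match a, b with
    | Sum.inl v, Sum.inr e => v ∈ (e : Sym2 V)
    | Sum.inr e, Sum.inl v => v ∈ (e : Sym2 V)
    | _, _ => False
  symm := ⟨by rintro (v | e) (w | f) h <;> simp_all⟩
  loopless := ⟨by rintro (v | e) h <;> simp_all⟩


lemma key {V : Type*} {G : SimpleGraph V}
    (c : Sym2 V → ℕ) (c' : Sym2 (V ⊕ G.edgeSet) → ℕ)
    (f g : G.edgeSet → V)
    (hfg : ∀ e : G.edgeSet, (e : Sym2 V) = s(f e, g e))
    (hc1 : ∀ e : G.edgeSet, c' s(Sum.inl (f e), Sum.inr e) = c e) :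
    ∀ n (u v : V) (p' : (subdivision G).Walk (Sum.inl u) (Sum.inl v)),
      p'.length ≤ n → p'.support.Nodup →
      ∃ p : G.Walk u v, (p.edges.map c).Sublist (p'.edges.map c') ∧
        p.support.map Sum.inl = p'.support.filter (fun x => x.isLeft) := by
  intro n
  induction n with
  | zero =>
    intro u v p' hl hnd
    cases p' with
    | nil => exact ⟨Walk.nil, by simp, by rfl⟩
    | cons h q => simp at hl
  | succ n ih =>
    intro u v p' hl hnd
    cases p' with
    | nil => exact ⟨Walk.nil, by simp, by rfl⟩
    | @cons _ b _ h q =>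
      cases b with
      | inl w => exact absurd h (by simp [subdivision])
      | inr e =>
        cases q with
        | @cons _ b2 _ h2 q2 =>
          cases b2 with
          | inr e2 => exact absurd h2 (by simp [subdivision])
          | inl w =>
            have hue : u ∈ (e : Sym2 V) := by simpa [subdivision] using h
            have hwe : w ∈ (e : Sym2 V) := by simpa [subdivision] using h2
            have huw : u ≠ w := by
              simp only [Walk.support_cons, List.nodup_cons, Walk.support_cons] at hnd
              intro hh; subst hh
              exact hnd.1 (by simp)
            rw [hfg e] at hue hwe
            rw [Sym2.mem_iff] at hue hwe
            have heuw : (e : Sym2 V) = s(u, w) := by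
              rw [hfg e]
              rcases hue with h1 | h1 <;> rcases hwe with h2 | h2
              · exact absurd (h1.trans h2.symm) huw
              · rw [h1, h2]
              · rw [h1, h2]; exact Sym2.eq_swap
              · exact absurd (h1.trans h2.symm) huw
            have hadj : G.Adj u w := by
              rw [← mem_edgeSet, ← heuw]; exact e.2
            have hq2l : q2.length ≤ n := by
              simp only [Walk.length_cons] at hl; omega
            have hq2nd : q2.support.Nodup := by
              simp only [Walk.support_cons, List.nodup_cons] at hnd
              exact hnd.2.2
            obtain ⟨p, hsub, hsupp⟩ := ih w v q2 hq2l hq2nd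
            refine ⟨Walk.cons hadj p, ?_, ?_⟩
            · simp only [Walk.edges_cons, List.map_cons]
              have hsw : s(Sum.inr (α := V) e, Sum.inl w) = s(Sum.inl w, Sum.inr e) :=
                Sym2.eq_swap
              rw [hsw]
              have hce : c (s(u, w)) = c e := by rw [heuw]
              rcases hue with h1 | h1
              · have : c' s(Sum.inl u, Sum.inr e) = c e := by rw [h1]; exact hc1 e
                rw [hce, ← this]
                exact hsub.cons _ |>.cons₂ _
              · have hwf : w = f e := by
                  rcases hwe with h2 | h2
                  · exact h2
                  · exact absurd (h1.trans h2.symm) huw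
                have : c' s(Sum.inl w, Sum.inr e) = c e := by rw [hwf]; exact hc1 e
                rw [hce, ← this]
                exact (hsub.cons₂ _).cons _
            · simp only [Walk.support_cons, List.map_cons, List.filter_cons]
              simp [hsupp]

theorem stmt14 {V : Type*} (G : SimpleGraph V)
    (c : Sym2 V → ℕ) (c' : Sym2 (V ⊕ G.edgeSet) → ℕ)
    (f g : G.edgeSet → V) (ℓ : G.edgeSet → ℕ)
    (hfg : ∀ e : G.edgeSet, (e : Sym2 V) = s(f e, g e))
    (hc1 : ∀ e : G.edgeSet, c' s(Sum.inl (f e), Sum.inr e) = c e)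
    (hc2 : ∀ e : G.edgeSet, c' s(Sum.inl (g e), Sum.inr e) = ℓ e)
    (hinj : Function.Injective ℓ)
    (hnew : ∀ e e' : G.edgeSet, ℓ e ≠ c (e' : Sym2 V))
    (hrc : IsRainbowColoring (subdivision G) c') :
    ∀ u v : V, ∀ p' : (subdivision G).Walk (Sum.inl u) (Sum.inl v),
      p'.IsPath → (p'.edges.map c').Nodup →
      ∃ p : G.Walk u v, p.IsPath ∧ (p.edges.map c).Nodup ∧
        p.support.map Sum.inl = p'.support.filter (fun x => x.isLeft) := by
  intro u v p' hp hnd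
  obtain ⟨p, hsub, hsupp⟩ := key c c' f g hfg hc1 p'.length u v p' le_rfl hp.support_nodup
  refine ⟨p, ?_, hsub.nodup hnd, hsupp⟩
  rw [Walk.isPath_def]
  have h1 : (p.support.map (Sum.inl : V → V ⊕ G.edgeSet)).Nodup := by
    rw [hsupp]; exact hp.support_nodup.filter _
  exact h1.of_map _
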